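/- arXiv:2306.12033 — 3 statements merged into one kernel-verified Lean document; each statement's English description precedes it below -/
import Mathlib

section
/- Let u1, u2 be real numbers with |u1| ≤ 1 and |u2| ≤ 1. Consider the four scalar embeddings 0, u1, 2, u2+2 (training point 0, test-normal point u1, augmented point 2, test-anomaly point u2+2). After total distance normalization with mean z̄ = (u1+u2+4)/4, the validation loss equals L_val(u1,u2) = (|u1| + |u1 − 2| + |u2| + |u2 + 2|) / √(3u1² + 3u2² − 8u1 + 8u2 − 2u1u2 + 16). Then L_val(u1,u2) ≥ 1, with equality if and only if u1 = u2 = 0. -/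
set_option maxHeartbeats 1000000


/-- For |u1| ≤ 1, |u2| ≤ 1, the denominator of the closed-form validation loss is
positive, the loss L_val(u1,u2) = (|u1| + |u1−2| + |u2| + |u2+2|)/√(3u1²+3u2²−8u1+8u2−2u1u2+16)
is at least 1, and it equals 1 iff u1 = u2 = 0. -/
theorem stmt_1 (u1 u2 : ℝ) (h1 : |u1| ≤ 1) (h2 : |u2| ≤ 1) :
    0 < 3 * u1 ^ 2 + 3 * u2 ^ 2 - 8 * u1 + 8 * u2 - 2 * u1 * u2 + 16 ∧
    1 ≤ (|u1| + |u1 - 2| + |u2| + |u2 + 2|) /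
        Real.sqrt (3 * u1 ^ 2 + 3 * u2 ^ 2 - 8 * u1 + 8 * u2 - 2 * u1 * u2 + 16) ∧
    ((|u1| + |u1 - 2| + |u2| + |u2 + 2|) /
        Real.sqrt (3 * u1 ^ 2 + 3 * u2 ^ 2 - 8 * u1 + 8 * u2 - 2 * u1 * u2 + 16) = 1 ↔
      u1 = 0 ∧ u2 = 0) := by
  obtain ⟨h1l, h1r⟩ := abs_le.mp h1
  obtain ⟨h2l, h2r⟩ := abs_le.mp h2
  set D : ℝ := 3 * u1 ^ 2 + 3 * u2 ^ 2 - 8 * u1 + 8 * u2 - 2 * u1 * u2 + 16 with hDdef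
  have hD : 0 < D := by nlinarith
  have hsp : 0 < Real.sqrt D := Real.sqrt_pos.mpr hD
  have hs2 : Real.sqrt D ^ 2 = D := Real.sq_sqrt hD.le
  have ha : |u1 - 2| = 2 - u1 := by rw [abs_of_nonpos (by linarith)]; ring
  have hb : |u2 + 2| = u2 + 2 := abs_of_nonneg (by linarith)
  set N : ℝ := |u1| + |u1 - 2| + |u2| + |u2 + 2| with hNdef
  have hN0 : 0 ≤ N := by positivity
  have hN2 : D ≤ N ^ 2 := by
    rw [hNdef, ha, hb]
    rcases abs_cases u1 with ⟨e1, _⟩ | ⟨e1, _⟩ <;>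
      rcases abs_cases u2 with ⟨e2, _⟩ | ⟨e2, _⟩ <;> rw [e1, e2] <;> nlinarith
  have hle : Real.sqrt D ≤ N := by
    calc Real.sqrt D ≤ Real.sqrt (N ^ 2) := Real.sqrt_le_sqrt hN2
    _ = N := Real.sqrt_sq hN0
  refine ⟨hD, (one_le_div hsp).mpr hle, ?_⟩
  constructor
  · intro h
    have hNs : N = Real.sqrt D := by
      field_simp at h; linarith [h]
    have hND : N ^ 2 = D := by rw [hNs, hs2]
    rw [hNdef, ha, hb] at hND
    rcases abs_cases u1 with ⟨e1, p1⟩ | ⟨e1, p1⟩ <;>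
      rcases abs_cases u2 with ⟨e2, p2⟩ | ⟨e2, p2⟩ <;> rw [e1, e2] at hND
    · have hu1 : u1 ≤ 0 := by
        nlinarith [mul_nonneg p1 p2, mul_nonneg p1 (show (0:ℝ) ≤ 1 - u1 by linarith),
          sq_nonneg u2]
      have hu1' : u1 = 0 := le_antisymm hu1 p1
      refine ⟨hu1', ?_⟩
      rw [hu1'] at hND
      nlinarith [sq_nonneg u2]
    · exfalso
      nlinarith [mul_nonneg p1 (show (0:ℝ) ≤ 8 - 3*u1 + 2*u2 by linarith),
        mul_pos (neg_pos.mpr p2) (show (0:ℝ) < 8 + 3*u2 by linarith)]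
    · exfalso
      nlinarith [mul_nonneg (neg_nonneg.mpr p1.le) p2, sq_nonneg u1, sq_nonneg u2]
    · exfalso
      nlinarith [mul_pos (neg_pos.mpr p1) (neg_pos.mpr p2), sq_nonneg u1,
        mul_pos (neg_pos.mpr p2) (show (0:ℝ) < 3*u2 + 8 by linarith)]
  · rintro ⟨rfl, rfl⟩
    have : Real.sqrt D = 4 := by
      rw [show D = 16 by norm_num [hDdef]]
      rw [show (16:ℝ) = 4 ^ 2 by norm_num, Real.sqrt_sq (by norm_num)]
    rw [hNdef] at *
    simp only [this]
    norm_num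
end

section
/- For real u1, u2 with 0 ≤ u1 ≤ 1 and −1 ≤ u2 ≤ 0, the expression −3u1² − 3u2² + 8u1 − 8u2 + 2u1u2 is nonnegative, and equals zero if and only if u1 = u2 = 0. -/
theorem stmt_3 (u1 u2 : ℝ) (h1 : 0 ≤ u1) (h1' : u1 ≤ 1) (h2 : -1 ≤ u2) (h2' : u2 ≤ 0) :
    0 ≤ -3 * u1 ^ 2 - 3 * u2 ^ 2 + 8 * u1 - 8 * u2 + 2 * u1 * u2 ∧
    (-3 * u1 ^ 2 - 3 * u2 ^ 2 + 8 * u1 - 8 * u2 + 2 * u1 * u2 = 0 ↔ u1 = 0 ∧ u2 = 0) := by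
  refine ⟨by nlinarith [mul_nonneg h1 (sub_nonneg.2 h1'), mul_nonneg (neg_nonneg.2 h2') (by linarith : (0:ℝ) ≤ 1 + u2), mul_nonneg h1 (neg_nonneg.2 h2')], ?_, ?_⟩
  · intro h
    constructor
    · nlinarith [mul_nonneg h1 (sub_nonneg.2 h1'), mul_nonneg (neg_nonneg.2 h2') (by linarith : (0:ℝ) ≤ 1 + u2), mul_nonneg (neg_nonneg.2 h2') (by linarith : (0:ℝ) ≤ 5 - 2*u1)]
    · nlinarith [mul_nonneg h1 (sub_nonneg.2 h1'), mul_nonneg (neg_nonneg.2 h2') (by linarith : (0:ℝ) ≤ 1 + u2), mul_nonneg h1 (by linarith : (0:ℝ) ≤ 5 - 2*(-u2))]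
  · rintro ⟨rfl, rfl⟩; ring
end

section
/- For the function L_val(u1, u2) = (|u1| + |u1 − 2| + |u2| + |u2 + 2|) / √(3u1² + 3u2² − 8u1 + 8u2 − 2u1u2 + 16) defined for |u1| ≤ 1, |u2| ≤ 1, we have L_val(0,0) = 1 and L_val(u1,u2) > 1 for every (u1,u2) ≠ (0,0) in the domain; hence (0,0) is the unique global minimizer of L_val on [−1,1]². -/
/-!
Substituting `v = -u₂` makes everything symmetric: on `[-1, 1]²` the radicand is
`(4 - u₁ - v)² + 2u₁² + 2v²` and the numerator is `(4 - u₁ - v) + |u₁| + |v|`. Expanding the square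
of the numerator, the cross term `2(4 - u₁ - v)(|u₁| + |v|) ≥ 2(|u₁| + |v|)` already dominates
`2u₁² + 2v²` because `t² ≤ |t|` on `[-1, 1]`, and the leftover `(|u₁| + |v|)²` is positive off the origin.
-/

lemma sq_abs_le_abs_of_abs_le_one {t : ℝ} (ht : |t| ≤ 1) : t ^ 2 ≤ |t| := by
  rw [← sq_abs]
  nlinarith [abs_nonneg t]

lemma sq_add_two_mul_sq_lt_sq_add_abs {c x y : ℝ} (hx : |x| ≤ 1) (hy : |y| ≤ 1)
    (hc : 1 + x + y ≤ c) (hxy : x ≠ 0 ∨ y ≠ 0) :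
    (c - x - y) ^ 2 + 2 * x ^ 2 + 2 * y ^ 2 < (c - x - y + |x| + |y|) ^ 2 := by
  have hs : 0 < |x| + |y| := by
    rcases hxy with h | h <;> linarith [abs_pos.2 h, abs_nonneg x, abs_nonneg y]
  nlinarith [sq_abs_le_abs_of_abs_le_one hx, sq_abs_le_abs_of_abs_le_one hy]

lemma one_lt_div_sqrt {a b : ℝ} (ha : 0 < a) (hb : 0 < b) (hab : a < b ^ 2) : 1 < b / √a := by
  rw [one_lt_div (Real.sqrt_pos.2 ha)]
  exact (Real.sqrt_lt' hb).2 hab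

/-- L_val(0,0) = 1 and L_val(u1,u2) > 1 for all other (u1,u2) with |u1| ≤ 1, |u2| ≤ 1,
so (0,0) is the unique global minimizer of L_val on [−1,1]². -/
theorem stmt_15 :
    let L : ℝ → ℝ → ℝ := fun u1 u2 =>
      (|u1| + |u1 - 2| + |u2| + |u2 + 2|) /
        Real.sqrt (3 * u1 ^ 2 + 3 * u2 ^ 2 - 8 * u1 + 8 * u2 - 2 * u1 * u2 + 16)
    L 0 0 = 1 ∧
    ∀ u1 u2 : ℝ, |u1| ≤ 1 → |u2| ≤ 1 → (u1, u2) ≠ (0, 0) → 1 < L u1 u2 := by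
  intro L
  refine ⟨by norm_num [L], fun u1 u2 h1 h2 hne => ?_⟩
  obtain ⟨h1l, h1u⟩ := abs_le.1 h1
  obtain ⟨h2l, h2u⟩ := abs_le.1 h2
  have hnum : |u1| + |u1 - 2| + |u2| + |u2 + 2| = 4 - u1 - -u2 + |u1| + |-u2| := by
    rw [abs_of_nonpos (by linarith : u1 - 2 ≤ 0), abs_of_nonneg (by linarith : 0 ≤ u2 + 2),
      abs_neg]
    ring
  have hrad : 3 * u1 ^ 2 + 3 * u2 ^ 2 - 8 * u1 + 8 * u2 - 2 * u1 * u2 + 16 =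
      (4 - u1 - -u2) ^ 2 + 2 * u1 ^ 2 + 2 * (-u2) ^ 2 := by ring
  have hne' : u1 ≠ 0 ∨ -u2 ≠ 0 := by
    contrapose! hne
    simp_all
  show 1 < (|u1| + |u1 - 2| + |u2| + |u2 + 2|) /
    √(3 * u1 ^ 2 + 3 * u2 ^ 2 - 8 * u1 + 8 * u2 - 2 * u1 * u2 + 16)
  rw [hnum, hrad]
  refine one_lt_div_sqrt (by nlinarith) (by linarith [abs_nonneg u1, abs_nonneg (-u2)]) ?_
  exact sq_add_two_mul_sq_lt_sq_add_abs h1 (by rwa [abs_neg]) (by linarith) hne'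
end
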